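/- arXiv:1708.02088 — 3 statements merged into one kernel-verified Lean document; each statement's English description precedes it below -/
import Mathlib

section
/- Let G be a group and X₀ ⊆ G a subset such that the natural homomorphism A(CG(X₀)) → ⟨X₀⟩ is an isomorphism. Let u ∈ X₀ and set X₁ = (X₀ ∪ X₀^u) △ {u, u^{-2}}, where X₀^u = {x^u : x ∈ X₀} and △ denotes symmetric difference. Then the commutation graph CG(X₁) is isomorphic to the double of CG(X₀) along the star of u. -/
open scoped commutatorElement

/-- The set of commutator relations of a right-angled Artin group on a graph. -/
def raagRels {α : Type*} (Γ : SimpleGraph α) : Set (FreeGroup α) :=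
  {r | ∃ u v : α, Γ.Adj u v ∧ r = ⁅FreeGroup.of u, FreeGroup.of v⁆}

/-- The right-angled Artin group on the graph `Γ`. -/
def Raag {α : Type*} (Γ : SimpleGraph α) : Type _ := PresentedGroup (raagRels Γ)

instance {α : Type*} (Γ : SimpleGraph α) : Group (Raag Γ) :=
  inferInstanceAs (Group (PresentedGroup (raagRels Γ)))

/-- The standard generator of `Raag Γ` corresponding to a vertex. -/
def Raag.of {α : Type*} (Γ : SimpleGraph α) (v : α) : Raag Γ := PresentedGroup.of v

/-- The commutation graph of a subset `X` of a group `G`. -/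
def commGraph (G : Type*) [Group G] (X : Set G) : SimpleGraph X where
  Adj x y := x ≠ y ∧ Commute x.1 y.1
  symm := ⟨fun _ _ ⟨h1, h2⟩ => ⟨h1.symm, h2.symm⟩⟩
  loopless := ⟨fun _ ⟨h1, _⟩ => h1 rfl⟩

/-- The natural homomorphism `A(CG(X)) → G` extending the identity on `X`. -/
def natHom (G : Type*) [Group G] (X : Set G) : Raag (commGraph G X) →* G :=
  PresentedGroup.toGroup (f := Subtype.val) (by
    rintro r ⟨u, v, hadj, rfl⟩
    rw [map_commutatorElement]
    simp only [FreeGroup.lift_apply_of]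
    exact commutatorElement_eq_one_iff_commute.mpr hadj.2)

/-- The star of a vertex: vertices equal or adjacent to `v`. -/
def starSet {α : Type*} (Γ : SimpleGraph α) (v : α) : Set α := {w | w = v ∨ Γ.Adj v w}

/-- The link of a vertex: vertices adjacent to `v`. -/
def linkSet {α : Type*} (Γ : SimpleGraph α) (v : α) : Set α := {w | Γ.Adj v w}

/-- The double of a graph `X` along the star of a vertex `v`:
two copies of the complement of the star, glued along the star. -/
def doubleStar {α : Type*} (X : SimpleGraph α) (v : α) :
    SimpleGraph ((Fin 2 × {w : α // w ∉ starSet X v}) ⊕ {w : α // w ∈ starSet X v}) where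
  Adj a b :=
    match a, b with
    | .inl (i, x), .inl (j, y) => i = j ∧ X.Adj x.1 y.1
    | .inl (_, x), .inr y => X.Adj x.1 y.1
    | .inr x, .inl (_, y) => X.Adj x.1 y.1
    | .inr x, .inr y => X.Adj x.1 y.1
  symm := by
    constructor
    rintro (⟨i, x⟩ | x) (⟨j, y⟩ | y) h
    · exact ⟨h.1.symm, h.2.symm⟩
    · exact h.symm
    · exact h.symm
    · exact h.symm
  loopless := by
    constructor
    rintro (⟨i, x⟩ | x) h
    · exact X.loopless.irrefl _ h.2
    · exact X.loopless.irrefl _ h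

/-- The group element represented by a word (a list of letters with signs). -/
def wprod {α : Type*} (Γ : SimpleGraph α) (l : List (α × Bool)) : Raag Γ :=
  (l.map fun p => if p.2 then Raag.of Γ p.1 else (Raag.of Γ p.1)⁻¹).prod

/-- The word length of an element of `Raag Γ` with respect to the vertex generators. -/
noncomputable def wordLength {α : Type*} (Γ : SimpleGraph α) (w : Raag Γ) : ℕ :=
  sInf {n | ∃ l : List (α × Bool), l.length = n ∧ wprod Γ l = w}

/-- A word is reduced if its length realizes the word length of the element it represents. -/
def WordReduced {α : Type*} (Γ : SimpleGraph α) (l : List (α × Bool)) : Prop :=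
  l.length = wordLength Γ (wprod Γ l)

/-- The right-counting vector of a word: `rcv Γ l i` is the minimal word length of `y`
such that the suffix of `l` from position `i` equals `x * sᵢ^{eᵢ} * y` with `x` in the
subgroup generated by the link of `sᵢ`. -/
noncomputable def rcv {α : Type*} (Γ : SimpleGraph α) (l : List (α × Bool))
    (i : Fin l.length) : ℕ :=
  sInf {m | ∃ x y : Raag Γ,
    x ∈ Subgroup.closure (Raag.of Γ '' linkSet Γ (l.get i).1) ∧
    wordLength Γ y = m ∧
    wprod Γ (l.drop i) = x * wprod Γ [l.get i] * y}

/-- The exponent used by the inflating map `σ` at position `i` of the word `l`. -/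
noncomputable def sigmaExp {α : Type*} (Γ : SimpleGraph α) (M : ℕ) (l : List (α × Bool))
    (i : Fin l.length) : ℤ :=
  if (l.get i).2 then (4 : ℤ) ^ (M - 1 - rcv Γ l i)
  else -2 * (4 : ℤ) ^ (M - 1 - rcv Γ l i)

/-- The inflating map `σ` applied to a word `l`, as an element of `Raag Γ`. -/
noncomputable def sigmaProd {α : Type*} (Γ : SimpleGraph α) (M : ℕ)
    (l : List (α × Bool)) : Raag Γ :=
  (List.ofFn fun i : Fin l.length => (Raag.of Γ (l.get i).1) ^ (sigmaExp Γ M l i)).prod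

/-! The double embeds in `G`: the two copies of a vertex `x` outside `st(u)` go to `x` and
`u⁻¹ x u`, a vertex `w` of `st(u)` goes to `w`, except that `u` goes to `u⁻²`. This map is a
bijection onto `X₁` turning adjacency into commutation. As `A(CG(X₀))` embeds in `G`, the
relations that must fail can be refuted in the right-angled Artin group by homomorphisms: the
abelianization separates distinct generators and `u⁻²`, and the map to `S₃` sending `u` to a
3-cycle, the vertices outside `st(u)` to one transposition and the link of `u` to `1` shows
that such an `x` commutes neither with `u⁻²` nor with `u⁻¹ y u`. -/

namespace Raag

variable {α : Type*} {Γ : SimpleGraph α} {H : Type*} [Group H]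

def lift (f : α → H) (hf : ∀ a b, Γ.Adj a b → Commute (f a) (f b)) : Raag Γ →* H :=
  PresentedGroup.toGroup (by
    rintro r ⟨a, b, hab, rfl⟩
    rw [map_commutatorElement, FreeGroup.lift_apply_of, FreeGroup.lift_apply_of]
    exact commutatorElement_eq_one_iff_commute.mpr (hf a b hab))

@[simp]
theorem lift_of (f : α → H) (hf : ∀ a b, Γ.Adj a b → Commute (f a) (f b)) (v : α) :
    lift f hf (of Γ v) = f v :=
  PresentedGroup.toGroup.of _

noncomputable def toFinsupp (Γ : SimpleGraph α) : Raag Γ →* Multiplicative (α →₀ ℤ) :=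
  lift (fun v => .ofAdd (Finsupp.single v 1)) fun _ _ _ => Commute.all _ _

@[simp]
theorem toAdd_toFinsupp_of (v : α) :
    (toFinsupp Γ (of Γ v)).toAdd = Finsupp.single v 1 := by
  simp [toFinsupp]

theorem eq_of_conj_of_eq_of {u x y : α} (h : (of Γ u)⁻¹ * of Γ x * of Γ u = of Γ y) :
    x = y := by
  have := congrArg (fun g => (toFinsupp Γ g).toAdd) h
  simp only [map_mul, map_inv, toAdd_mul, toAdd_inv, toAdd_toFinsupp_of,
    neg_add_cancel_comm] at this
  exact Finsupp.single_left_injective one_ne_zero this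

theorem of_ne_of_zpow_neg_two (u x : α) : of Γ x ≠ of Γ u ^ (-2 : ℤ) := by
  intro h
  have := congrArg (fun g => (toFinsupp Γ g).toAdd x) h
  by_cases hx : u = x <;> simp [hx] at this

theorem exists_hom_eq_of_notMem_starSet (u : α) (s t : H) :
    ∃ φ : Raag Γ →* H, φ (of Γ u) = t ∧ ∀ x ∉ starSet Γ u, φ (of Γ x) = s := by
  classical
  let f : α → H := fun v => if v = u then t else if Γ.Adj u v then 1 else s
  have hf : ∀ a b, Γ.Adj a b → Commute (f a) (f b) := by
    intro a b hab
    simp only [f]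
    split_ifs <;> simp_all [Γ.adj_comm]
  refine ⟨lift f hf, by simp [f], fun x hx => ?_⟩
  simp only [starSet, Set.mem_ofPred_eq, not_or] at hx
  simp [f, hx]

theorem not_commute_of_zpow_neg_two {u x : α} (hx : x ∉ starSet Γ u) :
    ¬Commute (of Γ x) (of Γ u ^ (-2 : ℤ)) := by
  obtain ⟨φ, hφu, hφ⟩ :=
    exists_hom_eq_of_notMem_starSet (Γ := Γ) u (Equiv.swap (0 : Fin 3) 1) (finRotate 3)
  intro h
  have := (h.map φ).eq
  rw [map_zpow, hφ x hx, hφu] at this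
  revert this; decide

theorem not_commute_of_conj_of {u x y : α} (hx : x ∉ starSet Γ u) (hy : y ∉ starSet Γ u) :
    ¬Commute (of Γ x) ((of Γ u)⁻¹ * of Γ y * of Γ u) := by
  obtain ⟨φ, hφu, hφ⟩ :=
    exists_hom_eq_of_notMem_starSet (Γ := Γ) u (Equiv.swap (0 : Fin 3) 1) (finRotate 3)
  intro h
  have := (h.map φ).eq
  rw [map_mul, map_mul, map_inv, hφ x hx, hφ y hy, hφu] at this
  revert this; decide

end Raag

section Conj

variable {G : Type*} [Group G] {u x : G}

theorem inv_mul_mul_eq_self_iff : u⁻¹ * x * u = x ↔ Commute u x := by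
  rw [mul_assoc, inv_mul_eq_iff_eq_mul, eq_comm]
  rfl

theorem commute_inv_mul_mul_iff (u a b : G) :
    Commute (u⁻¹ * a * u) (u⁻¹ * b * u) ↔ Commute a b := by
  simpa using Commute.conj_iff (a := a) (b := b) u⁻¹

theorem inv_mul_mul_eq_iff_of_commute {z : G} (h : Commute u z) : u⁻¹ * x * u = z ↔ x = z := by
  rw [mul_assoc, inv_mul_eq_iff_eq_mul, h.eq, mul_left_inj]

end Conj

noncomputable def commGraphIsoOfInjective {V G : Type*} [Group G] {Γ : SimpleGraph V} {X : Set G}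
    (F : V → G) (hF : Function.Injective F) (hX : Set.range F = X)
    (hadj : ∀ a b, a ≠ b → (Γ.Adj a b ↔ Commute (F a) (F b))) : Γ ≃g commGraph G X := by
  subst hX
  refine ⟨Equiv.ofInjective F hF, fun {a b} => ?_⟩
  rcases eq_or_ne a b with rfl | hab
  · exact iff_of_false (SimpleGraph.irrefl _) (SimpleGraph.irrefl _)
  · rw [hadj a b hab]
    exact and_iff_right ((Equiv.ofInjective F hF).injective.ne hab)

section CommGraph

variable {G : Type*} [Group G] {X₀ : Set G} {u : G}

@[simp]
theorem natHom_of (X : Set G) (x : X) : natHom G X (Raag.of (commGraph G X) x) = x :=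
  PresentedGroup.toGroup.of _

theorem mem_starSet_commGraph_iff (hu : u ∈ X₀) (w : X₀) :
    w ∈ starSet (commGraph G X₀) ⟨u, hu⟩ ↔ Commute u w := by
  constructor
  · rintro (rfl | h)
    exacts [Commute.refl u, h.2]
  · intro h
    rcases eq_or_ne w ⟨u, hu⟩ with rfl | hne
    exacts [Or.inl rfl, Or.inr ⟨hne.symm, h⟩]

theorem eq_of_inv_mul_mul_eq (hinj : Function.Injective (natHom G X₀)) (hu : u ∈ X₀)
    {x y : X₀} (h : u⁻¹ * x * u = y) : x = y :=
  Raag.eq_of_conj_of_eq_of (u := ⟨u, hu⟩) (hinj (by simpa using h))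

theorem ne_zpow_neg_two (hinj : Function.Injective (natHom G X₀)) (hu : u ∈ X₀) (x : X₀) :
    (x : G) ≠ u ^ (-2 : ℤ) := fun h =>
  Raag.of_ne_of_zpow_neg_two ⟨u, hu⟩ x (hinj (by simpa using h))

theorem not_commute_zpow_neg_two (hinj : Function.Injective (natHom G X₀)) (hu : u ∈ X₀)
    {x : X₀} (hx : x ∉ starSet (commGraph G X₀) ⟨u, hu⟩) : ¬Commute (x : G) (u ^ (-2 : ℤ)) :=
  fun h => Raag.not_commute_of_zpow_neg_two hx (.of_map hinj (by simpa using h))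

theorem not_commute_inv_mul_mul (hinj : Function.Injective (natHom G X₀)) (hu : u ∈ X₀)
    {x y : X₀} (hx : x ∉ starSet (commGraph G X₀) ⟨u, hu⟩)
    (hy : y ∉ starSet (commGraph G X₀) ⟨u, hu⟩) : ¬Commute (x : G) (u⁻¹ * y * u) :=
  fun h => Raag.not_commute_of_conj_of hx hy (.of_map hinj (by simpa using h))

end CommGraph

section Double

variable {G : Type*} [Group G] {X₀ : Set G} {u : G}

open Classical in
noncomputable def doubleStarEmbedding (hu : u ∈ X₀) :
    (Fin 2 × {w : X₀ // w ∉ starSet (commGraph G X₀) ⟨u, hu⟩}) ⊕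
      {w : X₀ // w ∈ starSet (commGraph G X₀) ⟨u, hu⟩} → G
  | .inl (0, x) => x
  | .inl (1, x) => u⁻¹ * x * u
  | .inr w => if (w : G) = u then u ^ (-2 : ℤ) else w

variable (hu : u ∈ X₀)

@[simp] theorem doubleStarEmbedding_inl_zero (x) :
    doubleStarEmbedding hu (.inl (0, x)) = x := rfl

@[simp] theorem doubleStarEmbedding_inl_one (x) :
    doubleStarEmbedding hu (.inl (1, x)) = u⁻¹ * x * u := rfl

theorem doubleStarEmbedding_inr_of_eq {w : {w : X₀ // w ∈ starSet (commGraph G X₀) ⟨u, hu⟩}}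
    (hw : (w : G) = u) :
    doubleStarEmbedding hu (.inr w) = u ^ (-2 : ℤ) := if_pos hw

theorem doubleStarEmbedding_inr_of_ne {w : {w : X₀ // w ∈ starSet (commGraph G X₀) ⟨u, hu⟩}}
    (hw : (w : G) ≠ u) :
    doubleStarEmbedding hu (.inr w) = w := if_neg hw

theorem doubleStarEmbedding_inl_ne_inr (hinj : Function.Injective (natHom G X₀)) (i : Fin 2)
    (x : {w : X₀ // w ∉ starSet (commGraph G X₀) ⟨u, hu⟩})
    (w : {w : X₀ // w ∈ starSet (commGraph G X₀) ⟨u, hu⟩}) :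
    doubleStarEmbedding hu (.inl (i, x)) ≠ doubleStarEmbedding hu (.inr w) := by
  have hxw : x.1 ≠ w.1 := fun h => x.2 (h ▸ w.2)
  have hw' : Commute u w := (mem_starSet_commGraph_iff hu w).1 w.2
  by_cases hw : (w : G) = u
  · rw [doubleStarEmbedding_inr_of_eq hu hw]
    match i with
    | 0 => exact ne_zpow_neg_two hinj hu x
    | 1 =>
      rw [doubleStarEmbedding_inl_one, Ne, inv_mul_mul_eq_iff_of_commute (Commute.self_zpow u _)]
      exact ne_zpow_neg_two hinj hu x
  · rw [doubleStarEmbedding_inr_of_ne hu hw]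
    match i with
    | 0 => exact fun h => hxw (Subtype.ext h)
    | 1 => exact fun h => hxw (Subtype.ext ((inv_mul_mul_eq_iff_of_commute hw').1 h))

theorem doubleStarEmbedding_inl_injective (hinj : Function.Injective (natHom G X₀))
    {i j : Fin 2} {x y : {w : X₀ // w ∉ starSet (commGraph G X₀) ⟨u, hu⟩}}
    (h : doubleStarEmbedding hu (.inl (i, x)) = doubleStarEmbedding hu (.inl (j, y))) :
    i = j ∧ x = y := by
  have not_conj {a b : X₀} (ha : a ∉ starSet (commGraph G X₀) ⟨u, hu⟩)
      (h : (a : G) = u⁻¹ * b * u) : False := by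
    obtain rfl := eq_of_inv_mul_mul_eq hinj hu h.symm
    exact ha ((mem_starSet_commGraph_iff hu b).2 (inv_mul_mul_eq_self_iff.1 h.symm))
  match i, j with
  | 0, 0 => exact ⟨rfl, Subtype.ext (Subtype.ext h)⟩
  | 0, 1 => exact (not_conj x.2 h).elim
  | 1, 0 => exact (not_conj y.2 h.symm).elim
  | 1, 1 => exact ⟨rfl, Subtype.ext (Subtype.ext (by simpa using h))⟩

theorem doubleStarEmbedding_inr_injective (hinj : Function.Injective (natHom G X₀))
    {w w' : {w : X₀ // w ∈ starSet (commGraph G X₀) ⟨u, hu⟩}}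
    (h : doubleStarEmbedding hu (.inr w) = doubleStarEmbedding hu (.inr w')) : w = w' := by
  by_cases hw : (w : G) = u <;> by_cases hw' : (w' : G) = u
  · exact Subtype.ext (Subtype.ext (hw.trans hw'.symm))
  · rw [doubleStarEmbedding_inr_of_eq hu hw, doubleStarEmbedding_inr_of_ne hu hw'] at h
    exact absurd h.symm (ne_zpow_neg_two hinj hu w')
  · rw [doubleStarEmbedding_inr_of_ne hu hw, doubleStarEmbedding_inr_of_eq hu hw'] at h
    exact absurd h (ne_zpow_neg_two hinj hu w)
  · rw [doubleStarEmbedding_inr_of_ne hu hw, doubleStarEmbedding_inr_of_ne hu hw'] at h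
    exact Subtype.ext (Subtype.ext h)

theorem doubleStarEmbedding_injective (hinj : Function.Injective (natHom G X₀)) :
    Function.Injective (doubleStarEmbedding hu) := by
  rintro (⟨i, x⟩ | w) (⟨j, y⟩ | w') h
  · obtain ⟨rfl, rfl⟩ := doubleStarEmbedding_inl_injective hu hinj h
    rfl
  · exact absurd h (doubleStarEmbedding_inl_ne_inr hu hinj i x w')
  · exact absurd h.symm (doubleStarEmbedding_inl_ne_inr hu hinj j y w)
  · rw [doubleStarEmbedding_inr_injective hu hinj h]

theorem range_doubleStarEmbedding (hinj : Function.Injective (natHom G X₀)) :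
    Set.range (doubleStarEmbedding hu) =
      symmDiff (X₀ ∪ (fun x => u⁻¹ * x * u) '' X₀) {u, u ^ (-2 : ℤ)} := by
  have hu2 : u ^ (-2 : ℤ) ∉ X₀ := fun h => ne_zpow_neg_two hinj hu ⟨_, h⟩ rfl
  have hsq := Commute.self_zpow u (-2)
  ext z
  simp only [Set.mem_range, Set.mem_symmDiff, Set.mem_union, Set.mem_image,
    Set.mem_insert_iff, Set.mem_singleton_iff]
  constructor
  · rintro ⟨⟨i, x⟩ | w, rfl⟩
    · have hxu : (x : G) ≠ u := fun h => x.2 (Or.inl (Subtype.ext h))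
      match i with
      | 0 => exact Or.inl ⟨Or.inl x.1.2, not_or.2 ⟨hxu, ne_zpow_neg_two hinj hu x⟩⟩
      | 1 =>
        refine Or.inl ⟨Or.inr ⟨x, x.1.2, rfl⟩, ?_⟩
        rw [doubleStarEmbedding_inl_one, inv_mul_mul_eq_iff_of_commute (.refl u),
          inv_mul_mul_eq_iff_of_commute hsq]
        exact not_or.2 ⟨hxu, ne_zpow_neg_two hinj hu x⟩
    · by_cases hw : (w : G) = u
      · rw [doubleStarEmbedding_inr_of_eq hu hw]
        refine Or.inr ⟨Or.inr rfl, ?_⟩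
        rintro (h | ⟨y, hy, h⟩)
        exacts [hu2 h, ne_zpow_neg_two hinj hu ⟨y, hy⟩ ((inv_mul_mul_eq_iff_of_commute hsq).1 h)]
      · rw [doubleStarEmbedding_inr_of_ne hu hw]
        exact Or.inl ⟨Or.inl w.1.2, not_or.2 ⟨hw, ne_zpow_neg_two hinj hu w⟩⟩
  · rintro (⟨hz | ⟨y, hy, rfl⟩, hzu⟩ | ⟨rfl | rfl, hzX⟩)
    · by_cases hc : Commute u z
      · exact ⟨.inr ⟨⟨z, hz⟩, (mem_starSet_commGraph_iff hu _).2 hc⟩,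
          doubleStarEmbedding_inr_of_ne hu fun h => hzu (Or.inl h)⟩
      · exact ⟨.inl (0, ⟨⟨z, hz⟩, (mem_starSet_commGraph_iff hu _).not.2 hc⟩), rfl⟩
    · by_cases hc : Commute u y
      · rw [hc.inv_mul_cancel] at hzu ⊢
        exact ⟨.inr ⟨⟨y, hy⟩, (mem_starSet_commGraph_iff hu _).2 hc⟩,
          doubleStarEmbedding_inr_of_ne hu fun h => hzu (Or.inl h)⟩
      · exact ⟨.inl (1, ⟨⟨y, hy⟩, (mem_starSet_commGraph_iff hu _).not.2 hc⟩), rfl⟩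
    · exact absurd (Or.inl hu) hzX
    · exact ⟨.inr ⟨⟨u, hu⟩, Or.inl rfl⟩, doubleStarEmbedding_inr_of_eq hu rfl⟩

theorem commute_doubleStarEmbedding_inl_inl (hinj : Function.Injective (natHom G X₀))
    (i j : Fin 2) (x y : {w : X₀ // w ∉ starSet (commGraph G X₀) ⟨u, hu⟩}) :
    Commute (doubleStarEmbedding hu (.inl (i, x))) (doubleStarEmbedding hu (.inl (j, y))) ↔
      i = j ∧ Commute (x : G) y :=
  match i, j with
  | 0, 0 => (and_iff_right rfl).symm
  | 0, 1 => iff_of_false (not_commute_inv_mul_mul hinj hu x.2 y.2) (absurd ·.1 (by decide))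
  | 1, 0 => iff_of_false (not_commute_inv_mul_mul hinj hu y.2 x.2 ·.symm) (absurd ·.1 (by decide))
  | 1, 1 => (commute_inv_mul_mul_iff u x y).trans (and_iff_right rfl).symm

theorem commute_doubleStarEmbedding_inl_inr (hinj : Function.Injective (natHom G X₀))
    (i : Fin 2) (x : {w : X₀ // w ∉ starSet (commGraph G X₀) ⟨u, hu⟩})
    (w : {w : X₀ // w ∈ starSet (commGraph G X₀) ⟨u, hu⟩}) :
    Commute (doubleStarEmbedding hu (.inl (i, x))) (doubleStarEmbedding hu (.inr w)) ↔
      Commute (x : G) w := by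
  have hw' : Commute u w := (mem_starSet_commGraph_iff hu w).1 w.2
  by_cases hw : (w : G) = u
  · refine iff_of_false ?_ fun h =>
      x.2 ((mem_starSet_commGraph_iff hu x).2 (by rw [hw] at h; exact h.symm))
    rw [doubleStarEmbedding_inr_of_eq hu hw]
    match i with
    | 0 => exact not_commute_zpow_neg_two hinj hu x.2
    | 1 =>
      rw [doubleStarEmbedding_inl_one, ← (Commute.self_zpow u (-2)).inv_mul_cancel,
        commute_inv_mul_mul_iff]
      exact not_commute_zpow_neg_two hinj hu x.2
  · rw [doubleStarEmbedding_inr_of_ne hu hw]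
    match i with
    | 0 => rfl
    | 1 => rw [← commute_inv_mul_mul_iff u (x : G) w, hw'.inv_mul_cancel]; rfl

theorem commute_doubleStarEmbedding_inr_inr
    (w w' : {w : X₀ // w ∈ starSet (commGraph G X₀) ⟨u, hu⟩}) :
    Commute (doubleStarEmbedding hu (.inr w)) (doubleStarEmbedding hu (.inr w')) ↔
      Commute (w : G) w' := by
  have hc : Commute u w := (mem_starSet_commGraph_iff hu w).1 w.2
  have hc' : Commute u w' := (mem_starSet_commGraph_iff hu w').1 w'.2
  by_cases hw : (w : G) = u <;> by_cases hw' : (w' : G) = u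
  · rw [doubleStarEmbedding_inr_of_eq hu hw, doubleStarEmbedding_inr_of_eq hu hw', hw, hw']
    exact iff_of_true (.refl _) (.refl _)
  · rw [doubleStarEmbedding_inr_of_eq hu hw, doubleStarEmbedding_inr_of_ne hu hw', hw]
    exact iff_of_true (hc'.zpow_left _) hc'
  · rw [doubleStarEmbedding_inr_of_ne hu hw, doubleStarEmbedding_inr_of_eq hu hw', hw']
    exact iff_of_true (hc.symm.zpow_right _) hc.symm
  · rw [doubleStarEmbedding_inr_of_ne hu hw, doubleStarEmbedding_inr_of_ne hu hw']

theorem doubleStar_adj_iff_commute (hinj : Function.Injective (natHom G X₀))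
    {a b : (Fin 2 × {w : X₀ // w ∉ starSet (commGraph G X₀) ⟨u, hu⟩}) ⊕
      {w : X₀ // w ∈ starSet (commGraph G X₀) ⟨u, hu⟩}} (hab : a ≠ b) :
    (doubleStar (commGraph G X₀) ⟨u, hu⟩).Adj a b ↔
      Commute (doubleStarEmbedding hu a) (doubleStarEmbedding hu b) := by
  rcases a with ⟨i, x⟩ | w <;> rcases b with ⟨j, y⟩ | w'
  · rw [commute_doubleStarEmbedding_inl_inl hu hinj]
    refine and_congr_right fun hij => and_iff_right fun hxy => hab ?_
    rw [hij, Subtype.ext hxy]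
  · rw [commute_doubleStarEmbedding_inl_inr hu hinj]
    exact and_iff_right fun h : x.1 = w'.1 => x.2 (h ▸ w'.2)
  · rw [Commute.symm_iff, commute_doubleStarEmbedding_inl_inr hu hinj]
    exact (and_iff_right fun h : w.1 = y.1 => y.2 (h ▸ w.2)).trans Commute.symm_iff
  · rw [commute_doubleStarEmbedding_inr_inr hu]
    exact and_iff_right fun h => hab (congrArg Sum.inr (Subtype.ext h))

end Double

theorem commGraph_double_general (G : Type*) [Group G] (X₀ : Set G)
    (hinj : Function.Injective (natHom G X₀))
    (u : G) (hu : u ∈ X₀) :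
    Nonempty
      (commGraph G (symmDiff (X₀ ∪ (fun x => u⁻¹ * x * u) '' X₀) {u, u ^ (-2 : ℤ)}) ≃g
        doubleStar (commGraph G X₀) ⟨u, hu⟩) :=
  ⟨(commGraphIsoOfInjective _ (doubleStarEmbedding_injective hu hinj)
    (range_doubleStarEmbedding hu hinj) fun _ _ => doubleStar_adj_iff_commute hu hinj).symm⟩

/-- if the natural map `A(CG(X₀)) → ⟨X₀⟩` is an isomorphism and
`X₁ = (X₀ ∪ X₀^u) △ {u, u⁻²}`, then `CG(X₁)` is the double of `CG(X₀)` along the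
star of `u`. -/
theorem commGraph_double (G : Type*) [Group G] (X₀ : Set G)
    (hinj : Function.Injective (natHom G X₀))
    (hrange : (natHom G X₀).range = Subgroup.closure X₀)
    (u : G) (hu : u ∈ X₀) :
    Nonempty
      (commGraph G (symmDiff (X₀ ∪ (fun x => u⁻¹ * x * u) '' X₀) {u, u ^ (-2 : ℤ)}) ≃g
        doubleStar (commGraph G X₀) ⟨u, hu⟩) :=
  commGraph_double_general G X₀ hinj u hu
end

section
/- If w = s₁^{e₁}⋯s_ℓ^{e_ℓ} is a canonical expression for w ∈ B(M) ⊆ A(Γ), and σ(w) = s₁^{N₁}⋯s_ℓ^{N_ℓ} with Nᵢ = ((3eᵢ−1)/2)·4^{M−1−fᵢ}, then the sequence (s₁^{N₁}, …, s_ℓ^{N_ℓ}) is a subsequence of the universal sequence (u_k)_{k≥0} defined by u_{2ni+2j} = a_j^{4^i}, u_{2ni+2j+1} = a_j^{-2·4^i}. -/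
open scoped commutatorElement

/-
The letter `sᵢ^{Nᵢ}` sits in the universal sequence at the index `univIndex n (M - 1 - fᵢ) (sᵢ, eᵢ)`.
These indices are ordered lexicographically by block `M - 1 - fᵢ`, then by vertex, so they increase
along a canonical expression: `f` is nonincreasing, and ties are broken by increasing vertices.
The bound `fᵢ ≤ ℓ - 1 - i < M` keeps the truncated subtraction `M - 1 - fᵢ` honest.
-/

lemma wprod_cons {α : Type*} (Γ : SimpleGraph α) (p : α × Bool) (t : List (α × Bool)) :
    wprod Γ (p :: t) = wprod Γ [p] * wprod Γ t := by
  simp [wprod]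

lemma wordLength_wprod_le {α : Type*} (Γ : SimpleGraph α) (l : List (α × Bool)) :
    wordLength Γ (wprod Γ l) ≤ l.length :=
  Nat.sInf_le ⟨l, rfl, rfl⟩

/-- Taking `x = 1` and `y` the rest of the word bounds the right-counting vector. -/
lemma rcv_le_length_sub {α : Type*} (Γ : SimpleGraph α) (l : List (α × Bool))
    (i : Fin l.length) : rcv Γ l i ≤ l.length - (i + 1) := by
  have hdrop : l.drop i = l.get i :: l.drop (i + 1) := by
    rw [List.drop_eq_getElem_cons i.isLt]
    rfl
  calc rcv Γ l i ≤ wordLength Γ (wprod Γ (l.drop (i + 1))) :=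
        Nat.sInf_le ⟨1, _, one_mem _, rfl, by rw [hdrop, wprod_cons, one_mul]⟩
    _ ≤ (l.drop (i + 1)).length := wordLength_wprod_le Γ _
    _ = l.length - (i + 1) := by simp

/-- Position of the letter `a^{4^k}` (if `e`) or `a^{-2·4^k}` (if `¬e`) in the universal
sequence: block `k`, slot `2a` or `2a + 1`. -/
def univIndex (n k : ℕ) (p : Fin n × Bool) : ℕ :=
  2 * n * k + 2 * (p.1 : ℕ) + if p.2 then 0 else 1

lemma univIndex_lt_of_lt {n k k' : ℕ} (p p' : Fin n × Bool) (hk : k < k') :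
    univIndex n k p < univIndex n k' p' := by
  have hblock : 2 * n * k + 2 * n ≤ 2 * n * k' := by
    simpa [Nat.mul_succ] using Nat.mul_le_mul_left (2 * n) hk
  have := p.1.isLt
  unfold univIndex
  split_ifs <;> omega

lemma univIndex_lt_of_fst_lt {n : ℕ} (k : ℕ) {p p' : Fin n × Bool} (h : p.1 < p'.1) :
    univIndex n k p < univIndex n k p' := by
  have h' : (p.1 : ℕ) < p'.1 := h
  unfold univIndex
  split_ifs <;> omega

lemma apply_univIndex {n : ℕ} {Γ : SimpleGraph (Fin n)} {u : ℕ → Raag Γ}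
    (hu1 : ∀ (i : ℕ) (j : Fin n),
      u (2 * n * i + 2 * (j : ℕ)) = (Raag.of Γ j) ^ ((4 : ℤ) ^ i))
    (hu2 : ∀ (i : ℕ) (j : Fin n),
      u (2 * n * i + 2 * (j : ℕ) + 1) = (Raag.of Γ j) ^ (-(2 * (4 : ℤ) ^ i)))
    (k : ℕ) (p : Fin n × Bool) :
    u (univIndex n k p) = Raag.of Γ p.1 ^ (if p.2 then (4 : ℤ) ^ k else -2 * 4 ^ k) := by
  rcases p with ⟨a, _ | _⟩
  · simpa [univIndex, neg_mul] using hu2 k a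
  · simpa [univIndex] using hu1 k a

theorem sigma_letters_subsequence_general {n : ℕ} (Γ : SimpleGraph (Fin n))
    (u : ℕ → Raag Γ)
    (hu1 : ∀ (i : ℕ) (j : Fin n),
      u (2 * n * i + 2 * (j : ℕ)) = (Raag.of Γ j) ^ ((4 : ℤ) ^ i))
    (hu2 : ∀ (i : ℕ) (j : Fin n),
      u (2 * n * i + 2 * (j : ℕ) + 1) = (Raag.of Γ j) ^ (-(2 * (4 : ℤ) ^ i)))
    (M : ℕ) (l : List (Fin n × Bool))
    (hlen : l.length ≤ M)
    (hA : ∀ i j : Fin l.length, i < j → rcv Γ l j ≤ rcv Γ l i)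
    (hB : ∀ i j : Fin l.length, i < j → rcv Γ l i = rcv Γ l j →
      (l.get i).1 < (l.get j).1 ∧
        Commute (Raag.of Γ (l.get i).1) (Raag.of Γ (l.get j).1)) :
    ∃ κ : Fin l.length → ℕ, StrictMono κ ∧
      ∀ i : Fin l.length, (Raag.of Γ (l.get i).1) ^ (sigmaExp Γ M l i) = u (κ i) := by
  have hrcv : ∀ i : Fin l.length, rcv Γ l i ≤ M - 1 := fun i => by
    have := rcv_le_length_sub Γ l i
    omega
  refine ⟨fun i => univIndex n (M - 1 - rcv Γ l i) (l.get i), fun i j hij => ?_,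
    fun i => (apply_univIndex hu1 hu2 _ _).symm⟩
  rcases (hA i j hij).lt_or_eq with hlt | heq
  · exact univIndex_lt_of_lt _ _ (by have := hrcv i; omega)
  · simp only [heq]
    exact univIndex_lt_of_fst_lt _ (hB i j hij heq.symm).1

/-- if `l` is a canonical expression for `w ∈ B(M)`, then the sequence of
inflated letters `(s₁^{N₁}, …, s_ℓ^{N_ℓ})` of `σ(w)` is a subsequence of the universal
sequence `(u_k)`. -/
theorem sigma_letters_subsequence {n : ℕ} (hn : 0 < n) (Γ : SimpleGraph (Fin n))
    (u : ℕ → Raag Γ)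
    (hu1 : ∀ (i : ℕ) (j : Fin n),
      u (2 * n * i + 2 * (j : ℕ)) = (Raag.of Γ j) ^ ((4 : ℤ) ^ i))
    (hu2 : ∀ (i : ℕ) (j : Fin n),
      u (2 * n * i + 2 * (j : ℕ) + 1) = (Raag.of Γ j) ^ (-(2 * (4 : ℤ) ^ i)))
    (M : ℕ) (hM : 0 < M) (l : List (Fin n × Bool))
    (hred : WordReduced Γ l) (hlen : l.length ≤ M)
    (hA : ∀ i j : Fin l.length, i < j → rcv Γ l j ≤ rcv Γ l i)
    (hB : ∀ i j : Fin l.length, i < j → rcv Γ l i = rcv Γ l j →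
      (l.get i).1 < (l.get j).1 ∧
        Commute (Raag.of Γ (l.get i).1) (Raag.of Γ (l.get j).1)) :
    ∃ κ : Fin l.length → ℕ, StrictMono κ ∧
      ∀ i : Fin l.length, (Raag.of Γ (l.get i).1) ^ (sigmaExp Γ M l i) = u (κ i) :=
  sigma_letters_subsequence_general Γ u hu1 hu2 M l hlen hA hB
end

section
/- Let Γ be a finite graph, x, y ∈ A(Γ), and write x = x₀p, y = y₀p as reduced products where x₀y₀^{-1} is reduced (i.e., p is the maximal common right piece). Suppose x₀y₀^{-1} = ∏_{i=1}^k tᵢ^{gᵢ} is a reduced product of syllables (tᵢ ∈ V, gᵢ ∈ ℤ\{0}). If x₀'y₀'^{-1} = ∏_{i=1}^k tᵢ^{hᵢ} is another reduced product with the same syllable letters tᵢ and each hᵢ nonzero of the same sign as gᵢ, then for any vertex u: x₀y₀^{-1} ∈ ⟨st(u)⟩ if and only if x₀'y₀'^{-1} ∈ ⟨st(u)⟩. -/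
open scoped commutatorElement

/-! Sending the vertices outside a set `S` to `1` retracts `A(Γ)` onto `⟨S⟩`, and it can only
shorten a syllable product. A reduced syllable product with a letter outside `S` would get
strictly shorter, so it lies in `⟨S⟩` exactly when all its letters do. -/

namespace Raag

variable {α : Type*} {Γ : SimpleGraph α}

theorem commute_of_adj {a b : α} (h : Γ.Adj a b) : Commute (Raag.of Γ a) (Raag.of Γ b) := by
  rw [← commutatorElement_eq_one_iff_commute]
  change QuotientGroup.mk' _ ⁅FreeGroup.of a, FreeGroup.of b⁆ = 1
  exact (QuotientGroup.eq_one_iff _).mpr (Subgroup.subset_normalClosure ⟨a, b, h, rfl⟩)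

variable (Γ) (S : Set α) [DecidablePred (· ∈ S)]

def retraction : Raag Γ →* Raag Γ :=
  PresentedGroup.toGroup (f := fun v => if v ∈ S then Raag.of Γ v else 1) (by
    rintro r ⟨a, b, hadj, rfl⟩
    rw [map_commutatorElement, commutatorElement_eq_one_iff_commute]
    simp only [FreeGroup.lift_apply_of]
    split_ifs
    exacts [commute_of_adj hadj, Commute.one_right _, Commute.one_left _, Commute.one_left _])

theorem retraction_of (v : α) :
    retraction Γ S (Raag.of Γ v) = if v ∈ S then Raag.of Γ v else 1 :=
  PresentedGroup.toGroup.of _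

theorem retraction_eq_self_of_mem_closure {w : Raag Γ}
    (hw : w ∈ Subgroup.closure (Raag.of Γ '' S)) : retraction Γ S w = w := by
  induction hw using Subgroup.closure_induction with
  | mem x hx => obtain ⟨v, hv, rfl⟩ := hx; rw [retraction_of, if_pos hv]
  | one => exact map_one _
  | mul x y _ _ hx hy => rw [map_mul, hx, hy]
  | inv x _ hx => rw [map_inv, hx]

variable {Γ S}

def zpowWord (v : α) (e : ℤ) : List (α × Bool) :=
  List.replicate e.natAbs (v, decide (0 ≤ e))

theorem wprod_zpowWord (v : α) (e : ℤ) : wprod Γ (zpowWord v e) = Raag.of Γ v ^ e := by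
  rw [wprod, zpowWord, List.map_replicate, List.prod_replicate]
  rcases le_or_gt 0 e with he | he
  · rw [if_pos (decide_eq_true he), ← zpow_natCast, Int.natAbs_of_nonneg he]
  · rw [if_neg (by simpa using he), inv_pow, ← zpow_natCast, ← zpow_neg,
      Int.ofNat_natAbs_of_nonpos he.le, neg_neg]

theorem wordLength_le_length {l : List (α × Bool)} {w : Raag Γ} (hl : wprod Γ l = w) :
    wordLength Γ w ≤ l.length :=
  Nat.sInf_le ⟨l, rfl, hl⟩

variable (Γ)

def syllableProd {k : ℕ} (t : Fin k → α) (e : Fin k → ℤ) : Raag Γ :=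
  (List.ofFn fun i => Raag.of Γ (t i) ^ e i).prod

variable {Γ}

theorem wordLength_syllableProd_le {k : ℕ} (t : Fin k → α) (e : Fin k → ℤ) :
    wordLength Γ (syllableProd Γ t e) ≤ ∑ i, (e i).natAbs := by
  let word := (List.ofFn fun i => zpowWord (t i) (e i)).flatten
  refine (wordLength_le_length (l := word) ?_).trans ?_
  · rw [wprod, List.map_flatten, List.prod_flatten, List.map_map, List.map_ofFn]
    exact congrArg List.prod (congrArg List.ofFn (funext fun i => wprod_zpowWord (t i) (e i)))
  · simp [word, List.length_flatten, List.sum_ofFn, zpowWord]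

theorem retraction_syllableProd {k : ℕ} (t : Fin k → α) (e : Fin k → ℤ) :
    retraction Γ S (syllableProd Γ t e) =
      syllableProd Γ t (fun i => if t i ∈ S then e i else 0) := by
  rw [syllableProd, map_list_prod, List.map_ofFn]
  refine congrArg List.prod (congrArg List.ofFn (funext fun i => ?_))
  simp only [Function.comp_apply, map_zpow, retraction_of]
  split_ifs
  · rfl
  · rw [one_zpow, zpow_zero]

theorem syllableProd_mem_closure_iff {k : ℕ} (t : Fin k → α) {e : Fin k → ℤ}
    (he : ∀ i, e i ≠ 0) (hred : wordLength Γ (syllableProd Γ t e) = ∑ i, (e i).natAbs) :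
    syllableProd Γ t e ∈ Subgroup.closure (Raag.of Γ '' S) ↔ ∀ i, t i ∈ S := by
  constructor
  · intro hmem i
    by_contra hi
    have hle := wordLength_syllableProd_le (Γ := Γ) t (fun i => if t i ∈ S then e i else 0)
    rw [← retraction_syllableProd, retraction_eq_self_of_mem_closure Γ S hmem, hred] at hle
    have hlt : ∑ j, (if t j ∈ S then e j else 0).natAbs < ∑ j, (e j).natAbs := by
      refine Finset.sum_lt_sum (fun j _ => ?_) ⟨i, Finset.mem_univ i, ?_⟩
      · split_ifs <;> simp
      · simpa [hi] using he i
    exact hle.not_gt hlt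
  · intro hS
    refine Subgroup.list_prod_mem _ fun x hx => ?_
    obtain ⟨i, rfl⟩ := List.mem_ofFn.mp hx
    exact zpow_mem (Subgroup.subset_closure (Set.mem_image_of_mem _ (hS i))) _

end Raag

theorem syllable_membership_star_general {n : ℕ} (Γ : SimpleGraph (Fin n))
    (x₀ y₀ : Raag Γ)
    (k : ℕ) (t : Fin k → Fin n) (g h : Fin k → ℤ)
    (hg : ∀ i, g i ≠ 0) (hh : ∀ i, h i ≠ 0)
    (hw : x₀ * y₀⁻¹ = (List.ofFn fun i => (Raag.of Γ (t i)) ^ (g i)).prod)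
    (hwred : wordLength Γ (x₀ * y₀⁻¹) = ∑ i, (g i).natAbs)
    (w' : Raag Γ)
    (hw' : w' = (List.ofFn fun i => (Raag.of Γ (t i)) ^ (h i)).prod)
    (hw'red : wordLength Γ w' = ∑ i, (h i).natAbs)
    (u : Fin n) :
    x₀ * y₀⁻¹ ∈ Subgroup.closure (Raag.of Γ '' starSet Γ u) ↔
      w' ∈ Subgroup.closure (Raag.of Γ '' starSet Γ u) := by
  classical
  rw [hw] at hwred ⊢
  rw [hw'] at hw'red ⊢
  exact (Raag.syllableProd_mem_closure_iff t hg hwred).trans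
    (Raag.syllableProd_mem_closure_iff t hh hw'red).symm

/-- with `x = x₀p`, `y = y₀p` reduced products, `x₀y₀⁻¹` reduced, and
`x₀y₀⁻¹ = ∏ tᵢ^{gᵢ}` a reduced product of syllables; if `w' = ∏ tᵢ^{hᵢ}` is another
reduced product with the same syllable letters and each `hᵢ` nonzero of the same sign as
`gᵢ`, then `x₀y₀⁻¹ ∈ ⟨st(u)⟩` iff `w' ∈ ⟨st(u)⟩`. -/
theorem syllable_membership_star {n : ℕ} (Γ : SimpleGraph (Fin n))
    (x y p x₀ y₀ : Raag Γ)
    (hx : x = x₀ * p) (hy : y = y₀ * p)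
    (hxr : wordLength Γ x = wordLength Γ x₀ + wordLength Γ p)
    (hyr : wordLength Γ y = wordLength Γ y₀ + wordLength Γ p)
    (hred : wordLength Γ (x₀ * y₀⁻¹) = wordLength Γ x₀ + wordLength Γ y₀)
    (k : ℕ) (t : Fin k → Fin n) (g h : Fin k → ℤ)
    (hg : ∀ i, g i ≠ 0) (hh : ∀ i, h i ≠ 0)
    (hsign : ∀ i, 0 < g i ↔ 0 < h i)
    (hw : x₀ * y₀⁻¹ = (List.ofFn fun i => (Raag.of Γ (t i)) ^ (g i)).prod)
    (hwred : wordLength Γ (x₀ * y₀⁻¹) = ∑ i, (g i).natAbs)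
    (w' : Raag Γ)
    (hw' : w' = (List.ofFn fun i => (Raag.of Γ (t i)) ^ (h i)).prod)
    (hw'red : wordLength Γ w' = ∑ i, (h i).natAbs)
    (u : Fin n) :
    x₀ * y₀⁻¹ ∈ Subgroup.closure (Raag.of Γ '' starSet Γ u) ↔
      w' ∈ Subgroup.closure (Raag.of Γ '' starSet Γ u) :=
  syllable_membership_star_general Γ x₀ y₀ k t g h hg hh hw hwred w' hw' hw'red u
end
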